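/- arXiv:1804.00333 — 2 statements merged into one kernel-verified Lean document; each statement's English description precedes it below -/
import Mathlib

section
/- Suppose V : ℝ≥0 → ℝ is differentiable with V̇(t) ≤ 0 for all t, and ψ(‖x_{ij}(t)‖) ≤ V(t) for each edge (i,j), where ψ is strictly increasing on [0, r]. If V(0) < ψ(r) and ‖x_{ij}(0)‖ ≤ r, and t ↦ ‖x_{ij}(t)‖ is continuous, then ‖x_{ij}(t)‖ < r for all t ≥ 0. -/
/-!
Since `V` is nonincreasing, `ψ (d s) ≤ V s ≤ V 0 < ψ r` for every `s ≥ 0`, so `d` never takes the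
value `r` on `[0, ∞)`. Starting at `d 0 ≤ r`, a continuous `d` that exceeded `r` later would have to
cross `r` by the intermediate value theorem.
-/

open Set

theorem antitoneOn_Ici_of_deriv_nonpos {f : ℝ → ℝ} {a : ℝ} (hf : Differentiable ℝ f)
    (hf' : ∀ x ≥ a, deriv f x ≤ 0) : AntitoneOn f (Ici a) :=
  antitoneOn_of_deriv_nonpos (convex_Ici a) hf.continuous.continuousOn hf.differentiableOn
    fun x hx => hf' x (interior_Ici.subset hx).le

theorem ContinuousOn.lt_of_forall_ne {α β : Type*} [ConditionallyCompleteLinearOrder α]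
    [TopologicalSpace α] [OrderTopology α] [DenselyOrdered α] [LinearOrder β]
    [TopologicalSpace β] [OrderClosedTopology β] {f : α → β} {a : α} {r : β}
    (hf : ContinuousOn f (Ici a)) (ha : f a ≤ r) (hne : ∀ s ≥ a, f s ≠ r) :
    ∀ t ≥ a, f t < r := by
  intro t ht
  by_contra! hrt
  obtain ⟨s, hs, hfs⟩ := intermediate_value_Icc ht (hf.mono Icc_subset_Ici_self) ⟨ha, hrt⟩
  exact hne s hs.1 hfs

theorem connectivity_preserved_of_lyapunov_general
    (ψ : ℝ → ℝ) (V d : ℝ → ℝ) (r : ℝ)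
    (hVdiff : Differentiable ℝ V)
    (hVdec : ∀ t ≥ (0 : ℝ), deriv V t ≤ 0)
    (hd_cont : Continuous d)
    (hdom : ∀ t ≥ (0 : ℝ), ψ (d t) ≤ V t)
    (hV0 : V 0 < ψ r)
    (hd0 : d 0 ≤ r) :
    ∀ t ≥ (0 : ℝ), d t < r := by
  have hVanti : AntitoneOn V (Ici 0) := antitoneOn_Ici_of_deriv_nonpos hVdiff hVdec
  refine hd_cont.continuousOn.lt_of_forall_ne hd0 fun s hs hds => hV0.not_ge ?_
  calc ψ r = ψ (d s) := by rw [hds]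
    _ ≤ V s := hdom s hs
    _ ≤ V 0 := hVanti self_mem_Ici hs hs

/-- Connectivity preservation: if a differentiable `V` is nonincreasing
(`V̇ ≤ 0` on `t ≥ 0`), dominates each link potential `ψ(d(t)) ≤ V(t)` for a
continuous nonnegative distance `d`, `ψ` is strictly increasing on `[0, r]`,
`V(0) < ψ(r)` and `d(0) ≤ r`, then `d(t) < r` for all `t ≥ 0`. -/
theorem connectivity_preserved_of_lyapunov
    (ψ : ℝ → ℝ) (V d : ℝ → ℝ) (r : ℝ) (hr : 0 < r)
    (hψmono : StrictMonoOn ψ (Set.Icc 0 r))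
    (hVdiff : Differentiable ℝ V)
    (hVdec : ∀ t ≥ (0 : ℝ), deriv V t ≤ 0)
    (hd_cont : Continuous d)
    (hd_nonneg : ∀ t ≥ (0 : ℝ), 0 ≤ d t)
    (hdom : ∀ t ≥ (0 : ℝ), ψ (d t) ≤ V t)
    (hV0 : V 0 < ψ r)
    (hd0 : d 0 ≤ r) :
    ∀ t ≥ (0 : ℝ), d t < r :=
  connectivity_preserved_of_lyapunov_general ψ V d r hVdiff hVdec hd_cont hdom hV0 hd0
end

section
/- Let f : ℝ≥0 → ℝⁿ be differentiable with f(t) → L as t → ∞ and f' uniformly continuous (e.g., f'' bounded). Then f'(t) → 0 as t → ∞. -/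
/-- Barbalat's lemma: if a differentiable `f : [0,∞) → ℝⁿ` converges to a limit
`L` at infinity and its derivative is uniformly continuous on `[0,∞)`, then the
derivative tends to zero at infinity. -/
theorem barbalat_deriv_tendsto_zero
    (n : ℕ) (f : ℝ → EuclideanSpace ℝ (Fin n)) (L : EuclideanSpace ℝ (Fin n))
    (hdiff : Differentiable ℝ f)
    (hlim : Filter.Tendsto f Filter.atTop (nhds L))
    (huc : UniformContinuousOn (deriv f) (Set.Ici 0)) :
    Filter.Tendsto (deriv f) Filter.atTop (nhds 0) := by
  rw [Metric.tendsto_atTop]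
  intro ε hε
  obtain ⟨δ, hδ0, hδ⟩ := Metric.uniformContinuousOn_iff.mp huc (ε/2) (by positivity)
  set d : ℝ := δ/2 with hd
  have hd0 : 0 < d := by positivity
  obtain ⟨N, hN⟩ := Metric.tendsto_atTop.mp hlim (d*ε/4) (by positivity)
  refine ⟨max N 0, fun t ht => ?_⟩
  have ht0 : (0:ℝ) ≤ t := le_trans (le_max_right N 0) ht
  have htN : N ≤ t := le_trans (le_max_left N 0) ht
  have httd : t ≤ t + d := by linarith
  -- near-constancy of the derivative on [t, t+d]
  have hsub : ∀ x ∈ Set.Icc t (t+d), ‖deriv f x - deriv f t‖ ≤ ε/2 := by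
    intro x hx
    have hx0 : (0:ℝ) ≤ x := le_trans ht0 hx.1
    have hdist : dist x t < δ := by
      rw [Real.dist_eq, abs_of_nonneg (sub_nonneg.mpr hx.1)]
      linarith [hx.2]
    have := hδ x hx0 t ht0 hdist
    rw [dist_eq_norm] at this
    exact this.le
  -- integrability
  have hcont : ContinuousOn (deriv f) (Set.Ici 0) := huc.continuousOn
  have hIcc : Set.uIcc t (t+d) ⊆ Set.Ici (0:ℝ) := by
    rw [Set.uIcc_of_le httd]
    intro x hx
    exact le_trans ht0 hx.1
  have hInt : IntervalIntegrable (deriv f) MeasureTheory.volume t (t+d) :=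
    (hcont.mono hIcc).intervalIntegrable
  -- FTC
  have hFTC : ∫ x in t..(t+d), deriv f x = f (t+d) - f t :=
    intervalIntegral.integral_deriv_eq_sub (fun x _ => hdiff.differentiableAt) hInt
  have hIntC : IntervalIntegrable (fun _ : ℝ => deriv f t) MeasureTheory.volume t (t+d) :=
    intervalIntegrable_const
  have hsplit : (∫ x in t..(t+d), (deriv f x - deriv f t))
      = (f (t+d) - f t) - d • deriv f t := by
    rw [intervalIntegral.integral_sub hInt hIntC, hFTC,
        intervalIntegral.integral_const]
    ring_nf
  -- bound the integral of the difference
  have hbound : ‖∫ x in t..(t+d), (deriv f x - deriv f t)‖ ≤ ε/2 * |t + d - t| := by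
    apply intervalIntegral.norm_integral_le_of_norm_le_const
    intro x hx
    rw [Set.uIoc_of_le httd] at hx
    exact hsub x ⟨hx.1.le, hx.2⟩
  have habs : |t + d - t| = d := by
    rw [add_sub_cancel_left, abs_of_pos hd0]
  rw [habs] at hbound
  -- bound ‖f (t+d) - f t‖
  have hf1 : dist (f (t+d)) L < d*ε/4 := hN (t+d) (by linarith)
  have hf2 : dist (f t) L < d*ε/4 := hN t htN
  have hfd : ‖f (t+d) - f t‖ < d*ε/2 := by
    have := dist_triangle_right (f (t+d)) (f t) L
    rw [dist_eq_norm] at this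
    calc ‖f (t+d) - f t‖ ≤ dist (f (t+d)) L + dist (f t) L := this
      _ < d*ε/4 + d*ε/4 := by exact add_lt_add hf1 hf2
      _ = d*ε/2 := by ring
  -- combine
  have key : d * ‖deriv f t‖ < d * ε := by
    have h1 : ‖d • deriv f t‖ = d * ‖deriv f t‖ := by
      rw [norm_smul, Real.norm_eq_abs, abs_of_pos hd0]
    have h2 : d • deriv f t = (f (t+d) - f t) - (∫ x in t..(t+d), (deriv f x - deriv f t)) := by
      rw [hsplit]; abel
    calc d * ‖deriv f t‖ = ‖d • deriv f t‖ := h1.symm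
      _ = ‖(f (t+d) - f t) - (∫ x in t..(t+d), (deriv f x - deriv f t))‖ := by rw [h2]
      _ ≤ ‖f (t+d) - f t‖ + ‖∫ x in t..(t+d), (deriv f x - deriv f t)‖ := norm_sub_le _ _
      _ < d*ε/2 + ε/2 * d := add_lt_add_of_lt_of_le hfd hbound
      _ = d * ε := by ring
  have : ‖deriv f t‖ < ε := by
    have := (mul_lt_mul_iff_right₀ hd0).mp key
    exact this
  simpa [dist_eq_norm] using this
end
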